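/- For the standard logistic density g(u) = e^{-u}/(1+e^{-u})², the limit of |g'(u)/g(u)| as u → ±∞ equals 1, hence is finite; but |u · g'(u)/g(u)| tends to +∞ as u → ±∞. -/

import Mathlib

open Filter Topology Real

/-!
The score of the logistic density is `g'/g = (e^{-u} - 1)/(1 + e^{-u}) = -tanh (u/2)`, an odd
function tending to `∓1` at `±∞`. Hence `|g'/g| → 1`, while `|u · g'/g| = |u| · |g'/g|` grows
like `|u|`.
-/

noncomputable def logisticScore (u : ℝ) : ℝ := (exp (-u) - 1) / (1 + exp (-u))

theorem hasDerivAt_logisticDensity (u : ℝ) :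
    HasDerivAt (fun u => exp (-u) / (1 + exp (-u)) ^ 2)
      (exp (-u) / (1 + exp (-u)) ^ 2 * logisticScore u) u := by
  have hexp : HasDerivAt (fun u => exp (-u)) (-exp (-u)) u := by
    simpa using (hasDerivAt_neg u).exp
  have hpos : 0 < 1 + exp (-u) := by positivity
  refine (hexp.fun_div ((hexp.const_add 1).fun_pow 2) (pow_ne_zero 2 hpos.ne')).congr_deriv ?_
  unfold logisticScore
  field_simp
  ring

theorem logisticScore_neg (u : ℝ) : logisticScore (-u) = -logisticScore u := by
  unfold logisticScore
  rw [neg_neg, exp_neg]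
  have := exp_pos u
  field_simp
  ring

theorem tendsto_logisticScore_atTop : Tendsto logisticScore atTop (𝓝 (-1)) := by
  have hexp : Tendsto (fun u => exp (-u)) atTop (𝓝 0) :=
    tendsto_exp_atBot.comp tendsto_neg_atTop_atBot
  convert (hexp.sub_const 1).div (hexp.const_add 1) (by norm_num) using 2
  · rfl
  · norm_num

theorem tendsto_logisticScore_atBot : Tendsto logisticScore atBot (𝓝 1) := by
  have := (tendsto_logisticScore_atTop.comp tendsto_neg_atBot_atTop).neg
  simpa [Function.comp_def, logisticScore_neg] using this

theorem tendsto_abs_mul_atTop_of_tendsto_abs {l : Filter ℝ} {f : ℝ → ℝ} {c : ℝ}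
    (hl : Tendsto (fun u => |u|) l atTop) (hf : Tendsto f l (𝓝 c)) (hc : c ≠ 0) :
    Tendsto (fun u => |u * f u|) l atTop := by
  simpa only [abs_mul] using hl.atTop_mul_pos (abs_pos.2 hc) hf.abs

/-- For the standard logistic density `g(u) = e^{-u}/(1+e^{-u})²`, the limit of
`|g'(u)/g(u)|` as `u → ±∞` equals `1` (hence is finite), but
`|u · g'(u)/g(u)|` tends to `+∞` as `u → ±∞`. -/
theorem logistic_density_score_limits
    (g : ℝ → ℝ) (hg : ∀ u, g u = Real.exp (-u) / (1 + Real.exp (-u)) ^ 2) :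
    (Tendsto (fun u => |deriv g u / g u|) atTop (𝓝 1) ∧
     Tendsto (fun u => |deriv g u / g u|) atBot (𝓝 1)) ∧
    (Tendsto (fun u => |u * deriv g u / g u|) atTop atTop ∧
     Tendsto (fun u => |u * deriv g u / g u|) atBot atTop) := by
  obtain rfl : g = fun u => exp (-u) / (1 + exp (-u)) ^ 2 := funext hg
  have hscore : ∀ u, deriv (fun u => exp (-u) / (1 + exp (-u)) ^ 2) u
      / (exp (-u) / (1 + exp (-u)) ^ 2) = logisticScore u := fun u => by
    rw [(hasDerivAt_logisticDensity u).deriv, mul_div_cancel_left₀ _ (by positivity)]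
  simp only [mul_div_assoc, hscore]
  refine ⟨⟨?_, ?_⟩, ?_, ?_⟩
  · simpa using tendsto_logisticScore_atTop.abs
  · simpa using tendsto_logisticScore_atBot.abs
  · exact tendsto_abs_mul_atTop_of_tendsto_abs tendsto_abs_atTop_atTop
      tendsto_logisticScore_atTop (by norm_num)
  · exact tendsto_abs_mul_atTop_of_tendsto_abs tendsto_abs_atBot_atTop
      tendsto_logisticScore_atBot (by norm_num)
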